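/- Let A be an admissible twig. Then there exists a unique admissible twig B such that d(B̄)·d(A) = d(B)·(d(A) − d(A̲)); moreover this B (the adjoint A* of A) satisfies d(B) = d(A) and d(B̄) = d(A) − d(A̲). -/

import Mathlib

open Matrix BigOperators

/-!
Expanding the determinant along the first row gives `d(a :: l) = a·d(l) - d(l̄)`. Hence for an
admissible twig `B` the numbers `d(B)` and `d(B̄)` are coprime with `0 < d(B̄) < d(B)`, and
`d(B)/d(B̄)` is the Hirzebruch–Jung continued fraction `b_1 - 1/(b_2 - 1/(⋯))`; conversely every
reduced fraction `n/q` with `0 < q < n` has exactly one such expansion with all entries `≥ 2`.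
Reversing a twig does not change `d`, so `d(A)/d(A̲)`, and with it `d(A)/(d(A) - d(A̲))`, is such a
fraction. The required equation says `d(B)/d(B̄) = d(A)/(d(A) - d(A̲))`, an equality of reduced
fractions with positive denominators, so `B` is the twig expanding `d(A)/(d(A) - d(A̲))`.
-/

def twigMatrix (A : List ℤ) : Matrix (Fin A.length) (Fin A.length) ℤ :=
  fun i j =>
    if i = j then A.get i
    else if (i : ℕ) + 1 = (j : ℕ) ∨ (j : ℕ) + 1 = (i : ℕ) then -1
    else 0

/-- The determinant `d(A)` of a twig; in particular `d([]) = 1`. -/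
def twigDet (A : List ℤ) : ℤ := (twigMatrix A).det

def Admissible (A : List ℤ) : Prop := A ≠ [] ∧ ∀ a ∈ A, 2 ≤ a

lemma twigMatrix_apply {A : List ℤ} (i j : Fin A.length) :
    twigMatrix A i j =
      if (i : ℕ) = j then A[(i : ℕ)]
      else if (i : ℕ) + 1 = j ∨ (j : ℕ) + 1 = i then -1 else 0 := by
  simp [twigMatrix, Fin.ext_iff]

lemma twigDet_nil : twigDet [] = 1 := det_fin_zero

lemma twigDet_singleton (a : ℤ) : twigDet [a] = a := by
  simp [twigDet, twigMatrix]

lemma twigMatrix_cons_submatrix_succ (a : ℤ) (l : List ℤ) :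
    (twigMatrix (a :: l)).submatrix Fin.succ Fin.succ = twigMatrix l := by
  ext i j
  simp only [submatrix_apply, twigMatrix_apply, Fin.val_succ]
  grind

lemma twigDet_cons_cons (a b : ℤ) (l : List ℤ) :
    twigDet (a :: b :: l) = a * twigDet (b :: l) - twigDet l := by
  have hsub := twigMatrix_cons_submatrix_succ a (b :: l)
  have hsub2 : (twigMatrix (a :: b :: l)).submatrix (Fin.succ ∘ Fin.succ)
      (Fin.succAbove 1 ∘ Fin.succ) = twigMatrix l := by
    have hcols : (Fin.succAbove 1 ∘ Fin.succ : Fin l.length → Fin (l.length + 2))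
        = Fin.succ ∘ Fin.succ := by
      ext j; simp [Fin.succAbove]
    rw [hcols, ← submatrix_submatrix, hsub, twigMatrix_cons_submatrix_succ]
  -- the minor of the entry `(0, 1)` has first column `(-1, 0, …, 0)`
  have hminor : ((twigMatrix (a :: b :: l)).submatrix Fin.succ (Fin.succAbove 1)).det
      = -twigDet l := by
    erw [det_succ_column_zero, Fin.sum_univ_succ]
    simp [twigMatrix_apply, Fin.succAbove, hsub2, twigDet]
  rw [twigDet]
  erw [det_succ_row_zero, Fin.sum_univ_succ, Fin.sum_univ_succ]
  simp [twigMatrix_apply, hminor, hsub, twigDet, sub_eq_add_neg]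

lemma twigMatrix_reverse (A : List ℤ) :
    twigMatrix A.reverse =
      (twigMatrix A).submatrix ((finCongr A.length_reverse).trans Fin.revPerm)
        ((finCongr A.length_reverse).trans Fin.revPerm) := by
  ext i j
  have hi := i.isLt
  have hj := j.isLt
  simp only [List.length_reverse] at hi hj
  simp only [submatrix_apply, twigMatrix_apply, Equiv.trans_apply, Fin.revPerm_apply,
    finCongr_apply, Fin.val_rev, Fin.val_cast, List.getElem_reverse]
  grind

lemma twigDet_reverse (A : List ℤ) : twigDet A.reverse = twigDet A := by
  rw [twigDet, twigMatrix_reverse, det_submatrix_equiv_self, twigDet]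

/-- `(d(A), d(Ā))` for `A ≠ []`, computed by the first-row recursion. At `[]` it is `(1, 0)`:
the `0` is the convention `d(Ā̲) = 0` for one-entry twigs, whereas `twigDet [].tail = 1`. -/
def twigDetPair : List ℤ → ℤ × ℤ
  | [] => (1, 0)
  | a :: l => (a * (twigDetPair l).1 - (twigDetPair l).2, (twigDetPair l).1)

lemma twigDetPair_cons (a : ℤ) (l : List ℤ) :
    twigDetPair (a :: l) = (a * (twigDetPair l).1 - (twigDetPair l).2, (twigDetPair l).1) := rfl

lemma twigDetPair_bounds :
    ∀ {l : List ℤ}, (∀ x ∈ l, 2 ≤ x) →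
      0 ≤ (twigDetPair l).2 ∧ (twigDetPair l).2 < (twigDetPair l).1 ∧
        IsCoprime (twigDetPair l).1 (twigDetPair l).2
  | [], _ => ⟨le_rfl, one_pos, isCoprime_one_left⟩
  | a :: l, h => by
    obtain ⟨h0, hlt, hcop⟩ := twigDetPair_bounds fun x hx => h x (List.mem_cons_of_mem a hx)
    have ha : 2 ≤ a := h a List.mem_cons_self
    rw [twigDetPair_cons]
    refine ⟨by omega, by nlinarith, ?_⟩
    simpa [sub_eq_neg_add, mul_comm] using (hcop.neg_right.add_mul_left_right a).symm

lemma twigDetPair_snd_pos {l : List ℤ} (h : ∀ x ∈ l, 2 ≤ x) (hl : l ≠ []) :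
    0 < (twigDetPair l).2 := by
  obtain ⟨a, l, rfl⟩ := List.exists_cons_of_ne_nil hl
  obtain ⟨h0, hlt, -⟩ := twigDetPair_bounds fun x hx => h x (List.mem_cons_of_mem a hx)
  rw [twigDetPair_cons]
  omega

lemma twigDetPair_injective :
    ∀ {B C : List ℤ}, (∀ x ∈ B, 2 ≤ x) → (∀ x ∈ C, 2 ≤ x) →
      twigDetPair B = twigDetPair C → B = C
  | [], [], _, _, _ => rfl
  | [], c :: C, _, hC, h => by
    have := twigDetPair_snd_pos hC (List.cons_ne_nil c C)
    rw [← h] at this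
    exact absurd this (lt_irrefl 0)
  | b :: B, [], hB, _, h => by
    have := twigDetPair_snd_pos hB (List.cons_ne_nil b B)
    rw [h] at this
    exact absurd this (lt_irrefl 0)
  | b :: B, c :: C, hB, hC, h => by
    have hB' : ∀ x ∈ B, 2 ≤ x := fun x hx => hB x (List.mem_cons_of_mem b hx)
    have hC' : ∀ x ∈ C, 2 ≤ x := fun x hx => hC x (List.mem_cons_of_mem c hx)
    obtain ⟨hB0, hBlt, -⟩ := twigDetPair_bounds hB'
    obtain ⟨hC0, hClt, -⟩ := twigDetPair_bounds hC'
    rw [twigDetPair_cons, twigDetPair_cons, Prod.mk.injEq] at h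
    obtain ⟨hfst, hsnd⟩ := h
    rw [hsnd] at hfst hBlt
    have hbc : b = c := by nlinarith
    subst hbc
    rw [twigDetPair_injective hB' hC' (Prod.ext hsnd (by linarith))]

lemma exists_twigDetPair_eq {n q : ℤ} (hq : 0 ≤ q) (hqn : q < n) (hcop : IsCoprime n q) :
    ∃ B : List ℤ, (∀ x ∈ B, 2 ≤ x) ∧ twigDetPair B = (n, q) := by
  rcases hq.eq_or_lt with rfl | hq
  · have hn : n = 1 := by
      have := Int.isUnit_iff.mp (isCoprime_zero_right.mp hcop)
      omega
    exact ⟨[], by simp, by rw [hn]; rfl⟩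
  -- the first entry is `a = ⌈n/q⌉` and the rest expands `q/r`, where `n/q = a - r/q`
  obtain ⟨a, r, rfl, hr0, hrq⟩ : ∃ a r : ℤ, n = a * q - r ∧ 0 ≤ r ∧ r < q := by
    refine ⟨(n + q - 1) / q, (n + q - 1) / q * q - n, by ring, ?_, ?_⟩ <;>
      linarith [Int.mul_ediv_add_emod (n + q - 1) q, Int.emod_nonneg (n + q - 1) hq.ne',
        Int.emod_lt_of_pos (n + q - 1) hq]
  have ha : 2 ≤ a := by nlinarith
  have hcop' : IsCoprime q r := by
    simpa using hcop.symm.neg_right.add_mul_left_right a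
  obtain ⟨B, hB, hpair⟩ := exists_twigDetPair_eq hr0 hrq hcop'
  refine ⟨a :: B, ?_, ?_⟩
  · simpa [ha] using hB
  · simp [twigDetPair_cons, hpair]
termination_by q.toNat
decreasing_by omega

lemma twigDetPair_fst : ∀ A : List ℤ, (twigDetPair A).1 = twigDet A
  | [] => twigDet_nil.symm
  | [a] => by simp [twigDetPair, twigDet_singleton]
  | a :: b :: l => by
    rw [twigDetPair_cons, twigDet_cons_cons, ← twigDetPair_fst (b :: l), ← twigDetPair_fst l]
    rfl

lemma twigDetPair_of_ne_nil {A : List ℤ} (hA : A ≠ []) :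
    twigDetPair A = (twigDet A, twigDet A.tail) := by
  obtain ⟨a, l, rfl⟩ := List.exists_cons_of_ne_nil hA
  exact Prod.ext (twigDetPair_fst _) (twigDetPair_fst l)

lemma Admissible.reverse {A : List ℤ} (hA : Admissible A) : Admissible A.reverse :=
  ⟨List.reverse_ne_nil_iff.mpr hA.1, fun x hx => hA.2 x (List.mem_reverse.mp hx)⟩

lemma Admissible.twigDet_tail_bounds {A : List ℤ} (hA : Admissible A) :
    0 < twigDet A.tail ∧ twigDet A.tail < twigDet A ∧
      IsCoprime (twigDet A) (twigDet A.tail) := by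
  have hpos := twigDetPair_snd_pos hA.2 hA.1
  obtain ⟨-, hlt, hcop⟩ := twigDetPair_bounds hA.2
  rw [twigDetPair_of_ne_nil hA.1] at hpos hlt hcop
  exact ⟨hpos, hlt, hcop⟩

lemma Admissible.eq_of_twigDet_eq {B C : List ℤ} (hB : Admissible B) (hC : Admissible C)
    (h : twigDet B = twigDet C) (h' : twigDet B.tail = twigDet C.tail) : B = C :=
  twigDetPair_injective hB.2 hC.2 <| by
    rw [twigDetPair_of_ne_nil hB.1, twigDetPair_of_ne_nil hC.1, h, h']

lemma exists_admissible_twigDet_eq {n q : ℤ} (hq : 0 < q) (hqn : q < n) (hcop : IsCoprime n q) :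
    ∃ B : List ℤ, Admissible B ∧ twigDet B = n ∧ twigDet B.tail = q := by
  obtain ⟨B, hB, hpair⟩ := exists_twigDetPair_eq hq.le hqn hcop
  have hne : B ≠ [] := by rintro rfl; simp [twigDetPair] at hpair; omega
  rw [twigDetPair_of_ne_nil hne, Prod.mk.injEq] at hpair
  exact ⟨B, ⟨hne, hB⟩, hpair⟩

lemma eq_and_eq_of_mul_eq_mul_of_isCoprime {m m' n n' : ℤ} (hm : 0 < m) (hn : 0 < n)
    (hmm' : IsCoprime m m') (hnn' : IsCoprime n n') (h : m' * n = m * n') : m = n ∧ m' = n' := by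
  have hmn : m ∣ n := hmm'.dvd_of_dvd_mul_left (h ▸ dvd_mul_right m n')
  have hnm : n ∣ m := hnn'.dvd_of_dvd_mul_right (h ▸ dvd_mul_left n m')
  obtain rfl := Int.dvd_antisymm hm.le hn.le hmn hnm
  exact ⟨rfl, mul_right_cancel₀ hm.ne' (h.trans (mul_comm m n'))⟩

/-- for an admissible twig `A` there is a unique admissible twig `B`
with `d(B̄)·d(A) = d(B)·(d(A) − d(A̲))`; moreover any such `B` (the adjoint `A*`)
satisfies `d(B) = d(A)` and `d(B̄) = d(A) − d(A̲)`. -/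
theorem stmt4 (A : List ℤ) (hA : Admissible A) :
    (∃! B : List ℤ, Admissible B ∧
      twigDet B.tail * twigDet A = twigDet B * (twigDet A - twigDet A.dropLast)) ∧
    (∀ B : List ℤ, Admissible B →
      twigDet B.tail * twigDet A = twigDet B * (twigDet A - twigDet A.dropLast) →
      twigDet B = twigDet A ∧ twigDet B.tail = twigDet A - twigDet A.dropLast) := by
  obtain ⟨hq, hqn, hcop⟩ := hA.reverse.twigDet_tail_bounds
  simp only [List.tail_reverse, twigDet_reverse] at hq hqn hcop
  have hcop' : IsCoprime (twigDet A) (twigDet A - twigDet A.dropLast) := by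
    simpa [sub_eq_neg_add] using hcop.neg_right.add_mul_left_right 1
  have hdet : ∀ B : List ℤ, Admissible B →
      twigDet B.tail * twigDet A = twigDet B * (twigDet A - twigDet A.dropLast) →
      twigDet B = twigDet A ∧ twigDet B.tail = twigDet A - twigDet A.dropLast := by
    intro B hB h
    obtain ⟨hB0, hBlt, hBcop⟩ := hB.twigDet_tail_bounds
    exact eq_and_eq_of_mul_eq_mul_of_isCoprime (by omega) (by omega) hBcop hcop' h
  obtain ⟨B, hB, hBdet, hBtail⟩ := exists_admissible_twigDet_eq (by omega) (by omega) hcop'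
  refine ⟨⟨B, ⟨hB, by rw [hBdet, hBtail, mul_comm]⟩, fun C ⟨hC, h⟩ => ?_⟩, hdet⟩
  obtain ⟨hCdet, hCtail⟩ := hdet C hC h
  exact hC.eq_of_twigDet_eq hB (hCdet.trans hBdet.symm) (hCtail.trans hBtail.symm)
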